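/- arXiv:2605.02157 — 8 statements merged into one kernel-verified Lean document; each statement's English description precedes it below -/
import Mathlib

section
/- Fix strictly positive reals K, P_h, P_l, κ, γ, b, and integers N_r, n_τ, L with 0 ≤ N_r < n_τ ≤ L. Define A = P_h·(n_τ − N_r), D = P_l·L, F = b·(L − n_τ)·P_l + κ·L, m = K·L·A/(γ·F), n = (L·b·P_l + κ·L)/F, c = K·A²/γ, d = b·(n_τ − N_r)·P_h·P_l + κ·A, and e = P_l·F. Then the function f(x) = K·x·(A + (m·x + n)·D)² / (c·x + d + e·(m·x + n)²) is strictly increasing on (0, ∞). -/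
/-- Proposition 1 (monotonicity part): the SSINR achieved under the optimal
mismatched-filter weight `w*(x) = m·x + n` is strictly increasing in the
channel gain `x` on `(0, ∞)`. -/
theorem stmt1 (K Ph Pl κ γ b : ℝ)
    (hK : 0 < K) (hPh : 0 < Ph) (hPl : 0 < Pl) (hκ : 0 < κ) (hγ : 0 < γ) (hb : 0 < b)
    (Nr nτ L : ℤ) (hNr : 0 ≤ Nr) (hnτ : Nr < nτ) (hL : nτ ≤ L)
    (A D F m n c d e : ℝ)
    (hA : A = Ph * ((nτ : ℝ) - (Nr : ℝ)))
    (hD : D = Pl * (L : ℝ))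
    (hF : F = b * ((L : ℝ) - (nτ : ℝ)) * Pl + κ * (L : ℝ))
    (hm : m = K * (L : ℝ) * A / (γ * F))
    (hn : n = ((L : ℝ) * b * Pl + κ * (L : ℝ)) / F)
    (hc : c = K * A ^ 2 / γ)
    (hd : d = b * ((nτ : ℝ) - (Nr : ℝ)) * Ph * Pl + κ * A)
    (he : e = Pl * F)
    (f : ℝ → ℝ)
    (hf : ∀ x, f x = K * x * (A + (m * x + n) * D) ^ 2
            / (c * x + d + e * (m * x + n) ^ 2)) :
    StrictMonoOn f (Set.Ioi (0 : ℝ)) := by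
  -- basic positivity facts
  have hnτR : (Nr : ℝ) < (nτ : ℝ) := by exact_mod_cast hnτ
  have hLR : (nτ : ℝ) ≤ (L : ℝ) := by exact_mod_cast hL
  have hNrR : (0 : ℝ) ≤ (Nr : ℝ) := by exact_mod_cast hNr
  have hLpos : (0 : ℝ) < (L : ℝ) := by linarith
  have hApos : 0 < A := by
    rw [hA]
    have h1 : (0:ℝ) < (nτ : ℝ) - (Nr : ℝ) := by linarith
    positivity
  have hFpos : 0 < F := by
    rw [hF]
    have h1 : 0 ≤ b * ((L : ℝ) - (nτ : ℝ)) * Pl := by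
      apply mul_nonneg; apply mul_nonneg hb.le; linarith; exact hPl.le
    nlinarith
  have hDpos : 0 < D := by rw [hD]; positivity
  have hcpos : 0 < c := by rw [hc]; positivity
  have hdpos : 0 < d := by
    rw [hd]
    have : 0 < b * ((nτ : ℝ) - (Nr : ℝ)) * Ph * Pl := by
      apply mul_pos; apply mul_pos; apply mul_pos hb; linarith; exact hPh; exact hPl
    nlinarith
  have hepos : 0 < e := by rw [he]; positivity
  -- key identities: m = D*c/(A*e), n = D*d/(A*e)
  have hmkey : m = D * c / (A * e) := by
    rw [hm, hD, hc, he]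
    field_simp
  have hnkey : n = D * d / (A * e) := by
    have h1 : (nτ : ℝ) - (Nr : ℝ) ≠ 0 := by intro h; linarith
    rw [hn, hD, hd, he, hA]
    field_simp
  -- closed form for f on positive reals
  have hform : ∀ x : ℝ, 0 < x →
      f x = K * A ^ 2 * x / (c * x + d) + K * D ^ 2 * x / e := by
    intro x hx
    have hQ : 0 < c * x + d := by positivity
    have hw : m * x + n = D * (c * x + d) / (A * e) := by
      rw [hmkey, hnkey]; field_simp
    have hden : 0 < c * x + d + e * (m * x + n) ^ 2 := by positivity
    rw [hf x, hw]
    rw [hw] at hden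
    rw [div_add_div _ _ (ne_of_gt hQ) (ne_of_gt hepos),
      div_eq_div_iff (ne_of_gt hden) (by positivity)]
    field_simp
  -- strict monotonicity of the closed form
  intro x hx y hy hxy
  rw [Set.mem_Ioi] at hx hy
  rw [hform x hx, hform y hy]
  have h1 : K * A ^ 2 * x / (c * x + d) < K * A ^ 2 * y / (c * y + d) := by
    have hKA : 0 < K * A ^ 2 := by positivity
    rw [div_lt_div_iff₀ (by positivity) (by positivity)]
    nlinarith [mul_pos hKA (mul_pos hdpos (sub_pos.2 hxy))]
  have h2 : K * D ^ 2 * x / e < K * D ^ 2 * y / e := by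
    have hKD : 0 < K * D ^ 2 := by positivity
    rw [div_lt_div_iff_of_pos_right hepos]
    exact (mul_lt_mul_iff_right₀ hKD).2 hxy
  linarith
end

section
/- Fix strictly positive reals K, P_h, P_l, κ, γ, b, and integers N_r, n_τ, L with 0 ≤ N_r < n_τ ≤ L. Define A = P_h·(n_τ − N_r), D = P_l·L, F = b·(L − n_τ)·P_l + κ·L, m = K·L·A/(γ·F), n = (L·b·P_l + κ·L)/F, c = K·A²/γ, d = b·(n_τ − N_r)·P_h·P_l + κ·A, e = P_l·F, and f(x) = K·x·(A + (m·x + n)·D)² / (c·x + d + e·(m·x + n)²). Then for every ρ > 0 there exists a unique x* > 0 such that f(x*) = ρ. -/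
/-!
Under the relations `γ c = K A²`, `γ e m = K A D` and `c n = d m` between the coefficients,
the denominator factors as `K A t (A + D t) / (γ m)` with `t = m x + n`, and `f` collapses to
`(γ / A) (D t - n A / t + A - n D)`. This is continuous and strictly increasing for `x ≥ 0`,
vanishes at `0` and dominates `γ D m x / A`, so the intermediate value theorem gives the
solution and strict monotonicity its uniqueness.
-/

open Set

theorem existsUnique_gt_eq_of_strictMonoOn {α δ : Type*} [ConditionallyCompleteLinearOrder α]
    [TopologicalSpace α] [OrderTopology α] [DenselyOrdered α] [LinearOrder δ]
    [TopologicalSpace δ] [OrderClosedTopology δ] {g : α → δ} {x₀ a : α} {ρ : δ} (hx₀a : x₀ ≤ a)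
    (hcont : ContinuousOn g (Icc x₀ a)) (hmono : StrictMonoOn g (Ici x₀)) (hx₀ : g x₀ < ρ)
    (ha : ρ ≤ g a) : ∃! x, x₀ < x ∧ g x = ρ := by
  obtain ⟨x, hx, hgx⟩ := intermediate_value_Icc hx₀a hcont ⟨hx₀.le, ha⟩
  have hx₀x : x₀ < x := hx.1.lt_of_ne (by rintro rfl; exact hx₀.ne hgx)
  refine ⟨x, ⟨hx₀x, hgx⟩, fun y ⟨hy, hgy⟩ => ?_⟩
  exact hmono.injOn (mem_Ici.2 hy.le) (mem_Ici.2 hx₀x.le) (hgy.trans hgx.symm)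

theorem ssinr_denominator_eq {K A D γ m n c d e : ℝ} (hc : γ * c = K * A ^ 2)
    (he : γ * e * m = K * A * D) (hd : c * n = d * m) (x : ℝ) :
    γ * m * (c * x + d + e * (m * x + n) ^ 2) = K * A * (m * x + n) * (A + D * (m * x + n)) := by
  linear_combination m * x * hc + (m * x + n) ^ 2 * he + n * hc - γ * hd

noncomputable def reducedSSINR (γ A D m n x : ℝ) : ℝ :=
  γ / A * (D * (m * x + n) - n * A / (m * x + n) + A - n * D)

section Reduced

variable {γ A D m n : ℝ}

theorem ssinr_eq_reducedSSINR {K c d e x : ℝ} (hK : 0 < K) (hA : 0 < A)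
    (hD : 0 ≤ D) (hm : 0 < m) (hn : 0 < n) (hc : γ * c = K * A ^ 2)
    (he : γ * e * m = K * A * D) (hd : c * n = d * m) (hx : 0 ≤ x) :
    K * x * (A + (m * x + n) * D) ^ 2 / (c * x + d + e * (m * x + n) ^ 2) =
      reducedSSINR γ A D m n x := by
  have ht : 0 < m * x + n := by positivity
  have hden := ssinr_denominator_eq hc he hd x
  have hQ : c * x + d + e * (m * x + n) ^ 2 ≠ 0 := by
    intro h
    rw [h, mul_zero] at hden
    exact (by positivity : K * A * (m * x + n) * (A + D * (m * x + n)) ≠ 0) hden.symm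
  rw [reducedSSINR, div_eq_iff hQ]
  field_simp
  linear_combination (-(A + D * (m * x + n)) * x) * hden

theorem reducedSSINR_zero (hn : n ≠ 0) : reducedSSINR γ A D m n 0 = 0 := by
  simp only [reducedSSINR, mul_zero, zero_add, mul_div_cancel_left₀ A hn]
  ring

theorem continuousOn_reducedSSINR (hm : 0 ≤ m) (hn : 0 < n) :
    ContinuousOn (reducedSSINR γ A D m n) (Ici 0) := by
  refine fun x (hx : 0 ≤ x) => ContinuousAt.continuousWithinAt ?_
  have : m * x + n ≠ 0 := by positivity
  unfold reducedSSINR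
  fun_prop (disch := assumption)

theorem strictMonoOn_reducedSSINR (hγ : 0 < γ) (hA : 0 < A) (hD : 0 ≤ D) (hm : 0 < m)
    (hn : 0 < n) : StrictMonoOn (reducedSSINR γ A D m n) (Ici 0) := by
  intro x (hx : 0 ≤ x) y (hy : 0 ≤ y) hxy
  have htx : 0 < m * x + n := by positivity
  have htxy : m * x + n < m * y + n := by gcongr
  have : n * A / (m * y + n) < n * A / (m * x + n) := by gcongr
  refine mul_lt_mul_of_pos_left ?_ (div_pos hγ hA)
  nlinarith [mul_le_mul_of_nonneg_left htxy.le hD]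

theorem mul_le_reducedSSINR (hγ : 0 < γ) (hA : 0 < A) (hn : 0 < n) {x : ℝ}
    (hmx : 0 ≤ m * x) : γ * D * m * x / A ≤ reducedSSINR γ A D m n x := by
  have ht : 0 < m * x + n := by positivity
  have : n * A / (m * x + n) ≤ A := by
    rw [div_le_iff₀ ht]
    nlinarith
  calc γ * D * m * x / A = γ / A * (D * (m * x + n) - n * D) := by ring
    _ ≤ reducedSSINR γ A D m n x := mul_le_mul_of_nonneg_left (by linarith) (by positivity)

end Reduced

/-- Proposition 1 (existence and uniqueness part): for every threshold `ρ > 0`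
there is a unique `x* > 0` with `f x* = ρ`. -/
theorem stmt2 (K Ph Pl κ γ b : ℝ)
    (hK : 0 < K) (hPh : 0 < Ph) (hPl : 0 < Pl) (hκ : 0 < κ) (hγ : 0 < γ) (hb : 0 < b)
    (Nr nτ L : ℤ) (hNr : 0 ≤ Nr) (hnτ : Nr < nτ) (hL : nτ ≤ L)
    (A D F m n c d e : ℝ)
    (hA : A = Ph * ((nτ : ℝ) - (Nr : ℝ)))
    (hD : D = Pl * (L : ℝ))
    (hF : F = b * ((L : ℝ) - (nτ : ℝ)) * Pl + κ * (L : ℝ))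
    (hm : m = K * (L : ℝ) * A / (γ * F))
    (hn : n = ((L : ℝ) * b * Pl + κ * (L : ℝ)) / F)
    (hc : c = K * A ^ 2 / γ)
    (hd : d = b * ((nτ : ℝ) - (Nr : ℝ)) * Ph * Pl + κ * A)
    (he : e = Pl * F)
    (f : ℝ → ℝ)
    (hf : ∀ x, f x = K * x * (A + (m * x + n) * D) ^ 2
            / (c * x + d + e * (m * x + n) ^ 2))
    (ρ : ℝ) (hρ : 0 < ρ) :
    ∃! x : ℝ, 0 < x ∧ f x = ρ := by
  have hNrnτ : (Nr : ℝ) < nτ := by exact_mod_cast hnτ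
  have hLnτ : (nτ : ℝ) ≤ L := by exact_mod_cast hL
  have hLpos : (0 : ℝ) < L := by linarith [(by exact_mod_cast hNr : (0 : ℝ) ≤ Nr)]
  have hApos : 0 < A := hA ▸ mul_pos hPh (by linarith)
  have hDpos : 0 < D := hD ▸ mul_pos hPl hLpos
  have hFpos : 0 < F :=
    hF ▸ by nlinarith [mul_nonneg (mul_nonneg hb.le (sub_nonneg.2 hLnτ)) hPl.le]
  have hmpos : 0 < m := hm ▸ by positivity
  have hnpos : 0 < n := hn ▸ by positivity
  have hcrel : γ * c = K * A ^ 2 := by rw [hc]; field_simp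
  have herel : γ * e * m = K * A * D := by rw [he, hm, hD]; field_simp
  have hdrel : c * n = d * m := by rw [hc, hn, hd, hm, hA]; field_simp
  have hf_eq : ∀ x, 0 < x → f x = reducedSSINR γ A D m n x := fun x hx =>
    (hf x).trans (ssinr_eq_reducedSSINR hK hApos hDpos.le hmpos hnpos hcrel herel hdrel hx.le)
  have hρa : ρ ≤ reducedSSINR γ A D m n (ρ * A / (γ * D * m)) :=
    calc ρ = γ * D * m * (ρ * A / (γ * D * m)) / A := by field_simp
      _ ≤ _ := mul_le_reducedSSINR hγ hApos hnpos (by positivity)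
  rw [existsUnique_congr fun x => and_congr_right fun hx => by rw [hf_eq x hx]]
  exact existsUnique_gt_eq_of_strictMonoOn (by positivity)
    ((continuousOn_reducedSSINR hmpos.le hnpos).mono Icc_subset_Ici_self)
    (strictMonoOn_reducedSSINR hγ hApos hDpos.le hmpos hnpos)
    (by rwa [reducedSSINR_zero hnpos.ne']) hρa
end

section
/- Fix strictly positive reals K, P_h, P_l, κ, γ, b, and integers N_r, n_τ, L with 0 ≤ N_r < n_τ ≤ L, and define A = P_h·(n_τ − N_r), D = P_l·L, F = b·(L − n_τ)·P_l + κ·L, m = K·L·A/(γ·F), n = (L·b·P_l + κ·L)/F, c = K·A²/γ, d = b·(n_τ − N_r)·P_h·P_l + κ·A, e = P_l·F. Set a₃ = K·m²·D², a₂ = 2·K·m·D·(A + n·D), a₁ = K·(A + n·D)², b₂ = e·m², b₁ = c + 2·e·m·n, b₀ = d + e·n². Then the identity 2·D·A·(c/m) − A²·e = P_l·F·A² holds, and consequently the quadratic coefficient C₂ := 3·a₃·b₀ + a₂·b₁ − a₁·b₂ of the derivative-numerator polynomial satisfies C₂ = K·m²·(3·D²·d + 6·D²·e·n² + 2·D²·n·c/m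 + 2·A·D·e·n + P_l·F·A²) > 0. -/
/-- Key lemma in the appendix proof of Proposition 1: the exact cancellation
`2·D·A·(c/m) − A²·e = P_l·F·A²` and the resulting strict positivity of the
quadratic coefficient `C₂` of the derivative-numerator polynomial. -/
theorem stmt3 (K Ph Pl κ γ b : ℝ)
    (hK : 0 < K) (hPh : 0 < Ph) (hPl : 0 < Pl) (hκ : 0 < κ) (hγ : 0 < γ) (hb : 0 < b)
    (Nr nτ L : ℤ) (hNr : 0 ≤ Nr) (hnτ : Nr < nτ) (hL : nτ ≤ L)
    (A D F m n c d e : ℝ)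
    (hA : A = Ph * ((nτ : ℝ) - (Nr : ℝ)))
    (hD : D = Pl * (L : ℝ))
    (hF : F = b * ((L : ℝ) - (nτ : ℝ)) * Pl + κ * (L : ℝ))
    (hm : m = K * (L : ℝ) * A / (γ * F))
    (hn : n = ((L : ℝ) * b * Pl + κ * (L : ℝ)) / F)
    (hc : c = K * A ^ 2 / γ)
    (hd : d = b * ((nτ : ℝ) - (Nr : ℝ)) * Ph * Pl + κ * A)
    (he : e = Pl * F)
    (a₃ a₂ a₁ b₂ b₁ b₀ C₂ : ℝ)
    (ha₃ : a₃ = K * m ^ 2 * D ^ 2)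
    (ha₂ : a₂ = 2 * K * m * D * (A + n * D))
    (ha₁ : a₁ = K * (A + n * D) ^ 2)
    (hb₂ : b₂ = e * m ^ 2)
    (hb₁ : b₁ = c + 2 * e * m * n)
    (hb₀ : b₀ = d + e * n ^ 2)
    (hC₂ : C₂ = 3 * a₃ * b₀ + a₂ * b₁ - a₁ * b₂) :
    2 * D * A * (c / m) - A ^ 2 * e = Pl * F * A ^ 2 ∧
    C₂ = K * m ^ 2 * (3 * D ^ 2 * d + 6 * D ^ 2 * e * n ^ 2 + 2 * D ^ 2 * n * c / m
          + 2 * A * D * e * n + Pl * F * A ^ 2) ∧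
    0 < C₂ := by
  have hτNr : (0:ℝ) < (nτ : ℝ) - (Nr : ℝ) := by
    have : Nr < nτ := hnτ
    push_cast
    exact sub_pos.mpr (by exact_mod_cast this)
  have hLpos : (0:ℝ) < (L : ℝ) := by
    have : (0:ℤ) < L := lt_of_le_of_lt hNr (lt_of_lt_of_le hnτ hL)
    exact_mod_cast this
  have hLτ : (0:ℝ) ≤ (L : ℝ) - (nτ : ℝ) := by
    have : nτ ≤ L := hL
    push_cast
    exact sub_nonneg.mpr (by exact_mod_cast this)
  have hApos : 0 < A := by rw [hA]; positivity
  have hFpos : 0 < F := by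
    rw [hF]; positivity
  have hmpos : 0 < m := by
    rw [hm]; positivity
  have hnpos : 0 < n := by
    rw [hn]; positivity
  have hcpos : 0 < c := by rw [hc]; positivity
  have hdpos : 0 < d := by rw [hd]; positivity
  have hepos : 0 < e := by rw [he]; positivity
  have hDpos : 0 < D := by rw [hD]; positivity
  -- key: c/m = A*F/L
  have hcm : c / m = A * F / (L : ℝ) := by
    rw [hc, hm]
    field_simp
  have h1 : 2 * D * A * (c / m) - A ^ 2 * e = Pl * F * A ^ 2 := by
    rw [hcm, hD, he]
    field_simp
    ring
  refine ⟨h1, ?_, ?_⟩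
  · have h2 : 2 * D * A * (c / m) = Pl * F * A ^ 2 + A ^ 2 * e := by linarith
    have hexp : C₂ = K * m ^ 2 *
        (3 * D ^ 2 * d + 6 * D ^ 2 * e * n ^ 2 + 2 * D ^ 2 * n * (c/m)
          + 2 * A * D * e * n + (2 * D * A * (c/m) - A ^ 2 * e)) := by
      rw [hC₂, ha₃, ha₂, ha₁, hb₂, hb₁, hb₀]
      field_simp
      ring
    rw [hexp, h1]
    ring
  · have h2 : 2 * D * A * (c / m) = Pl * F * A ^ 2 + A ^ 2 * e := by linarith
    have hexp : C₂ = K * m ^ 2 *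
        (3 * D ^ 2 * d + 6 * D ^ 2 * e * n ^ 2 + 2 * D ^ 2 * n * (c/m)
          + 2 * A * D * e * n + (2 * D * A * (c/m) - A ^ 2 * e)) := by
      rw [hC₂, ha₃, ha₂, ha₁, hb₂, hb₁, hb₀]
      field_simp
      ring
    rw [hexp, h1]
    have : 0 < c / m := div_pos hcpos hmpos
    positivity
end

section
/- Let a, b, κ be strictly positive real numbers and define h : ℝ → ℝ by h(w) = (a + w·b)² / (κ·(a + w²·b)). Then h(w) ≤ (a + b)/κ for every real w, with equality if and only if w = 1. In particular the unique global maximizer of h over ℝ is w = 1. -/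
/-! Weighted Cauchy–Schwarz: `(a + b)(a + w²b) - (a + wb)² = ab(w - 1)²`, so the numerator of `h w`
is at most `(a + b)` times its denominator over `κ`, with equality exactly when `w = 1`. -/

theorem add_mul_add_sq_mul_sub_sq (a b w : ℝ) :
    (a + b) * (a + w ^ 2 * b) - (a + w * b) ^ 2 = a * b * (w - 1) ^ 2 := by
  ring

theorem sq_add_mul_le_add_mul_add_sq_mul {a b : ℝ} (ha : 0 ≤ a) (hb : 0 ≤ b) (w : ℝ) :
    (a + w * b) ^ 2 ≤ (a + b) * (a + w ^ 2 * b) := by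
  have := add_mul_add_sq_mul_sub_sq a b w
  nlinarith [mul_nonneg (mul_nonneg ha hb) (sq_nonneg (w - 1))]

theorem sq_add_mul_eq_add_mul_add_sq_mul_iff {a b : ℝ} (ha : 0 < a) (hb : 0 < b) (w : ℝ) :
    (a + w * b) ^ 2 = (a + b) * (a + w ^ 2 * b) ↔ w = 1 := by
  rw [eq_comm, ← sub_eq_zero, add_mul_add_sq_mul_sub_sq, mul_eq_zero_iff_left (by positivity),
    sq_eq_zero_iff, sub_eq_zero]

/-- For delay bins unaffected by residual self-interference and partial
eclipsing, the optimal mismatched-filter weight is `w = 1` (matched filter):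
`(a + wb)²/(κ(a + w²b)) ≤ (a + b)/κ` with equality iff `w = 1`. -/
theorem stmt5 (a b κ : ℝ) (ha : 0 < a) (hb : 0 < b) (hκ : 0 < κ)
    (h : ℝ → ℝ) (hh : ∀ w, h w = (a + w * b) ^ 2 / (κ * (a + w ^ 2 * b))) :
    (∀ w : ℝ, h w ≤ (a + b) / κ) ∧
    (∀ w : ℝ, h w = (a + b) / κ ↔ w = 1) := by
  have hden : ∀ w : ℝ, 0 < κ * (a + w ^ 2 * b) := fun w => by positivity
  have hbound : ∀ w : ℝ, (a + b) / κ = (a + b) * (a + w ^ 2 * b) / (κ * (a + w ^ 2 * b)) :=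
    fun w => (mul_div_mul_right _ _ (by positivity)).symm
  refine ⟨fun w => ?_, fun w => ?_⟩
  · rw [hh, hbound w]
    exact div_le_div_of_nonneg_right (sq_add_mul_le_add_mul_add_sq_mul ha.le hb.le w) (hden w).le
  · rw [hh, hbound w, div_left_inj' (hden w).ne']
    exact sq_add_mul_eq_add_mul_add_sq_mul_iff ha hb w
end

section
/- Let a, b, c, κ be strictly positive real numbers and define h : ℝ → ℝ by h(w) = (a + w·b)² / (c + κ·a + κ·b·w²). Then h attains its unique global maximum over ℝ at w* = 1 + c/(κ·a), and the maximum value is a²/(c + κ·a) + b/κ. -/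
/-- Closed-form optimal weight for delay bins affected by residual
self-interference of power `c` but no partial eclipsing: the SINR
`h(w) = (a + wb)²/(c + κa + κbw²)` attains its unique global maximum at
`w* = 1 + c/(κa)`, with maximum value `a²/(c + κa) + b/κ`. -/
theorem stmt6 (a b c κ : ℝ) (ha : 0 < a) (hb : 0 < b) (hc : 0 < c) (hκ : 0 < κ)
    (h : ℝ → ℝ) (hh : ∀ w, h w = (a + w * b) ^ 2 / (c + κ * a + κ * b * w ^ 2))
    (wstar : ℝ) (hw : wstar = 1 + c / (κ * a)) :
    h wstar = a ^ 2 / (c + κ * a) + b / κ ∧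
    (∀ w : ℝ, w ≠ wstar → h w < h wstar) := by
  have hca : 0 < c + κ * a := by positivity
  have hD : ∀ w : ℝ, 0 < c + κ * a + κ * b * w ^ 2 := fun w => by positivity
  have hmax : h wstar = a ^ 2 / (c + κ * a) + b / κ := by
    rw [hh, hw]
    have h1 : κ * a ≠ 0 := by positivity
    have h2 : (c + κ * a) ≠ 0 := ne_of_gt hca
    have h3 : (c + κ * a + κ * b * (1 + c / (κ * a)) ^ 2) ≠ 0 := ne_of_gt (hD _)
    field_simp
    ring
  refine ⟨hmax, fun w hwne => ?_⟩
  rw [hh w, hmax]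
  have hM : a ^ 2 / (c + κ * a) + b / κ
      = (a ^ 2 * κ + b * (c + κ * a)) / (κ * (c + κ * a)) := by
    rw [div_add_div _ _ (ne_of_gt hca) (ne_of_gt hκ)]
    rw [div_eq_div_iff (by positivity) (by positivity)]
    ring
  rw [hM, div_lt_div_iff₀ (hD w) (by positivity)]
  have hne : a * κ * w - (c + κ * a) ≠ 0 := by
    intro hcontr
    apply hwne
    rw [hw]
    have : w = (c + κ * a) / (a * κ) := by
      field_simp
      linarith
    rw [this]
    field_simp
    ring
  nlinarith [mul_pos hb (sq_pos_of_ne_zero hne), sq_nonneg (a * κ * w - (c + κ * a))]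
end

section
/- Fix strictly positive reals K, P_h, P_l, κ, γ, b, x and integers N_r, n_τ, L with 0 ≤ N_r < n_τ ≤ L, and set A = P_h·(n_τ − N_r). Define the SSINR as a function of the weight w by F(w) = K·x·(A + w·P_l·L)² / ( K·x·A²/γ + b·((n_τ − N_r)·P_h·P_l + (L − n_τ)·w²·P_l²) + κ·(A + w²·P_l·L) ). Then F attains its unique global maximum over ℝ at w* = ( K·L·x·A/γ + L·b·P_l + κ·L ) / ( b·(L − n_τ)·P_l + κ·L ). -/
/-- Key optimization lemma: `w ↦ C(A+Dw)²/(q+Ew²)` is uniquely maximized at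
`w₀ = qD/(AE)`. -/
lemma key_opt (C A D q E w : ℝ) (hC : 0 < C) (hA : 0 < A) (hD : 0 < D)
    (hq : 0 < q) (hE : 0 < E) (hw : w ≠ q * D / (A * E)) :
    C * (A + D * w) ^ 2 / (q + E * w ^ 2)
      < C * (A + D * (q * D / (A * E))) ^ 2 / (q + E * (q * D / (A * E)) ^ 2) := by
  have hAE : A * E ≠ 0 := by positivity
  have hdenw : 0 < q + E * w ^ 2 := by positivity
  have hrhs : C * (A + D * (q * D / (A * E))) ^ 2 / (q + E * (q * D / (A * E)) ^ 2)
      = C * (A ^ 2 * E + q * D ^ 2) / (q * E) := by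
    rw [div_eq_div_iff (by positivity) (by positivity)]
    field_simp
  rw [hrhs, div_lt_div_iff₀ hdenw (by positivity)]
  have hne : A * E * w - q * D ≠ 0 := by
    intro h
    apply hw
    field_simp
    linarith [sub_eq_zero.mp h]
  have hsq : 0 < (A * E * w - q * D) ^ 2 := by positivity
  nlinarith [mul_pos hC hsq]

/-- Eq. (41)/(44) of the paper: the optimal mismatched-filter weight for a
target with delay bin `nτ ∈ (N_r, L]` is
`w* = (K·L·x·A/γ + L·b·P_l + κ·L)/(b·(L − nτ)·P_l + κ·L)`. -/
theorem stmt7 (K Ph Pl κ γ b x : ℝ)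
    (hK : 0 < K) (hPh : 0 < Ph) (hPl : 0 < Pl) (hκ : 0 < κ) (hγ : 0 < γ)
    (hb : 0 < b) (hx : 0 < x)
    (Nr nτ L : ℤ) (hNr : 0 ≤ Nr) (hnτ : Nr < nτ) (hL : nτ ≤ L)
    (A : ℝ) (hA : A = Ph * ((nτ : ℝ) - (Nr : ℝ)))
    (F : ℝ → ℝ)
    (hF : ∀ w, F w = K * x * (A + w * Pl * (L : ℝ)) ^ 2
          / (K * x * A ^ 2 / γ
             + b * (((nτ : ℝ) - (Nr : ℝ)) * Ph * Pl + ((L : ℝ) - (nτ : ℝ)) * w ^ 2 * Pl ^ 2)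
             + κ * (A + w ^ 2 * Pl * (L : ℝ))))
    (wstar : ℝ)
    (hw : wstar = (K * (L : ℝ) * x * A / γ + (L : ℝ) * b * Pl + κ * (L : ℝ))
          / (b * ((L : ℝ) - (nτ : ℝ)) * Pl + κ * (L : ℝ))) :
    ∀ w : ℝ, w ≠ wstar → F w < F wstar := by
  intro w hne
  have hnN : (0:ℝ) < (nτ : ℝ) - (Nr : ℝ) := by
    have : Nr < nτ := hnτ
    have := sub_pos.mpr (show (Nr:ℝ) < (nτ:ℝ) by exact_mod_cast this)
    linarith
  have hLn : (0:ℝ) ≤ (L : ℝ) - (nτ : ℝ) := by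
    have : (nτ:ℝ) ≤ (L:ℝ) := by exact_mod_cast hL
    linarith
  have hLpos : (0:ℝ) < (L : ℝ) := by
    have : (0:ℝ) ≤ (Nr:ℝ) := by exact_mod_cast hNr
    linarith
  have hApos : 0 < A := by rw [hA]; positivity
  set C := K * x with hCdef
  set D := Pl * (L : ℝ) with hDdef
  set q := K * x * A ^ 2 / γ + b * (((nτ : ℝ) - (Nr : ℝ)) * Ph * Pl) + κ * A with hqdef
  set E := b * ((L : ℝ) - (nτ : ℝ)) * Pl ^ 2 + κ * Pl * (L : ℝ) with hEdef
  have hCpos : 0 < C := by positivity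
  have hDpos : 0 < D := by positivity
  have hqpos : 0 < q := by positivity
  have hEpos : 0 < E := by positivity
  have hwstar : wstar = q * D / (A * E) := by
    rw [hw, hqdef, hDdef, hEdef, hA]
    rw [div_eq_div_iff (by positivity) (by positivity)]
    field_simp
  have hform : ∀ v : ℝ, F v = C * (A + D * v) ^ 2 / (q + E * v ^ 2) := by
    intro v
    rw [hF v]
    congr 1 <;> ring
  rw [hform w, hform wstar, hwstar]
  exact key_opt C A D q E w hCpos hApos hDpos hqpos hEpos (by rwa [hwstar] at hne)
end

section
/- Let h ∈ ℂ^H and l ∈ ℂ^L be finite complex sequences, let N_r ≥ 0 be an integer, and let P_h, P_l > 0. Define the composite pulses s⁺, s⁻ ∈ ℂ^{H + N_r + L} by s^± = [√P_h·h ; 0_{N_r} ; ±√P_l·l] (the high-power part, then N_r zeros, then the signed low-power part). Then for every integer lag τ, R_{s⁺}(τ) + R_{s⁻}(τ) = 2·P_h·R_h(τ) + 2·P_l·R_l(τ); in particular, all cross-correlation terms between the high-power component and the low-power component cancel in the sum. -/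
open scoped ComplexConjugate

/-- Aperiodic autocorrelation of a (finitely supported) complex sequence on `ℤ`. -/
noncomputable def acorr (x : ℤ → ℂ) (τ : ℤ) : ℂ :=
  ∑' n : ℤ, x n * conj (x (n - τ))

lemma acorr_summable (x : ℤ → ℂ) (B : ℤ) (hx : ∀ n : ℤ, n < 0 ∨ B ≤ n → x n = 0)
    (τ : ℤ) : Summable (fun n : ℤ => x n * conj (x (n - τ))) := by
  apply summable_of_ne_finset_zero (s := Finset.Ico (0 : ℤ) B)
  intro n hn
  have : x n = 0 := by
    apply hx
    simp only [Finset.mem_Ico] at hn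
    omega
  simp [this]

lemma acorr_shift (x : ℤ → ℂ) (M τ : ℤ) :
    acorr (fun n => x (n - M)) τ = acorr x τ := by
  unfold acorr
  rw [← (Equiv.subRight M).tsum_eq (fun n => x n * conj (x (n - τ)))]
  apply tsum_congr
  intro n
  simp [Equiv.subRight, sub_right_comm]

/-- Eq. (14) of the paper: for the dual-power composite pulses
`s± = [√P_h·h ; 0_{N_r} ; ±√P_l·l]`, all cross-correlation terms between the
high- and low-power components cancel in the sum of autocorrelations:
`R_{s⁺}(τ) + R_{s⁻}(τ) = 2·P_h·R_h(τ) + 2·P_l·R_l(τ)` for every lag `τ`. -/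
theorem stmt9 (H L Nr : ℕ) (Ph Pl : ℝ) (hPh : 0 < Ph) (hPl : 0 < Pl)
    (h l : ℤ → ℂ)
    (hh : ∀ n : ℤ, n < 0 ∨ (H : ℤ) ≤ n → h n = 0)
    (hl : ∀ n : ℤ, n < 0 ∨ (L : ℤ) ≤ n → l n = 0)
    (splus sminus : ℤ → ℂ)
    (hsp : ∀ n : ℤ, splus n =
      (Real.sqrt Ph : ℂ) * h n + (Real.sqrt Pl : ℂ) * l (n - ((H : ℤ) + (Nr : ℤ))))
    (hsm : ∀ n : ℤ, sminus n =
      (Real.sqrt Ph : ℂ) * h n - (Real.sqrt Pl : ℂ) * l (n - ((H : ℤ) + (Nr : ℤ)))) :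
    ∀ τ : ℤ, acorr splus τ + acorr sminus τ
      = 2 * (Ph : ℂ) * acorr h τ + 2 * (Pl : ℂ) * acorr l τ := by
  intro τ
  set M : ℤ := (H : ℤ) + (Nr : ℤ) with hM
  set l' : ℤ → ℂ := fun n => l (n - M) with hl'def
  have hl' : ∀ n : ℤ, n < 0 ∨ M + (L : ℤ) ≤ n → l' n = 0 := by
    intro n hn
    apply hl
    omega
  have hsp' : ∀ n : ℤ, n < 0 ∨ M + (L : ℤ) ≤ n → splus n = 0 := by
    intro n hn
    rw [hsp n, hh n (by omega), hl (n - M) (by omega)]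
    ring
  have hsm' : ∀ n : ℤ, n < 0 ∨ M + (L : ℤ) ≤ n → sminus n = 0 := by
    intro n hn
    rw [hsm n, hh n (by omega), hl (n - M) (by omega)]
    ring
  have e1 : (Real.sqrt Ph : ℂ) * (Real.sqrt Ph : ℂ) = (Ph : ℂ) := by
    rw [← Complex.ofReal_mul, Real.mul_self_sqrt hPh.le]
  have e2 : (Real.sqrt Pl : ℂ) * (Real.sqrt Pl : ℂ) = (Pl : ℂ) := by
    rw [← Complex.ofReal_mul, Real.mul_self_sqrt hPl.le]
  have key : ∀ n : ℤ,
      splus n * conj (splus (n - τ)) + sminus n * conj (sminus (n - τ))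
      = 2 * (Ph : ℂ) * (h n * conj (h (n - τ)))
        + 2 * (Pl : ℂ) * (l' n * conj (l' (n - τ))) := by
    intro n
    simp only [hsp, hsm, hl'def, map_add, map_sub, map_mul, Complex.conj_ofReal]
    linear_combination (2 * h n * conj (h (n - τ))) * e1
      + (2 * l (n - M) * conj (l (n - τ - M))) * e2
  have Sp := acorr_summable splus (M + L) hsp' τ
  have Sm := acorr_summable sminus (M + L) hsm' τ
  have Sh := acorr_summable h H hh τ
  have Sl := acorr_summable l' (M + L) hl' τ
  have : acorr splus τ + acorr sminus τ
      = 2 * (Ph : ℂ) * acorr h τ + 2 * (Pl : ℂ) * acorr l' τ := by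
    unfold acorr
    rw [← Summable.tsum_add Sp Sm, ← tsum_mul_left, ← tsum_mul_left,
      ← Summable.tsum_add (Sh.mul_left _) (Sl.mul_left _)]
    exact tsum_congr key
  rw [this, hl'def, acorr_shift]
end

section
/- Let c, d ∈ ℂ^M be a complementary pair, i.e., R_c(τ) + R_d(τ) = 0 for every lag τ ≠ 0, set H = 2M, and define a = [c ; d] and b = [c ; −d] in ℂ^H. For an integer i with 1 ≤ i ≤ H − 1, define the eclipsed sequences a^i, b^i ∈ ℂ^H by zeroing the first i entries: a^i[n] = 0 for n < i and a^i[n] = a[n] for i ≤ n ≤ H−1, and similarly for b^i. Then for every integer lag τ with H/2 ≤ |τ| ≤ H − 1 and every i ∈ {1, …, H−1}, the joint cross-correlation satisfies R_{a, a^i}(τ) + R_{b, b^i}(τ) = 0. -/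
open scoped ComplexConjugate

/-- Aperiodic cross-correlation of two (finitely supported) complex sequences
on `ℤ`. -/
noncomputable def xcorr (x y : ℤ → ℂ) (τ : ℤ) : ℂ :=
  ∑' n : ℤ, x n * conj (y (n - τ))

/-- Enhanced sequence design for partial eclipsing: for the concatenated
construction `a = [c ; d]`, `b = [c ; −d]` from a complementary pair `(c, d)`
of length `M` (so `H = 2M`), the jointly processed correlation with the
eclipsed sequences (missing the first `i` samples) vanishes at all lags with
`H/2 ≤ |τ| ≤ H − 1`, for every eclipsing index `i ∈ {1, …, H−1}`. -/
theorem stmt12 (M H : ℕ) (hH : H = 2 * M) (c d : ℤ → ℂ)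
    (hc : ∀ k : ℤ, k < 0 ∨ (M : ℤ) ≤ k → c k = 0)
    (hd : ∀ k : ℤ, k < 0 ∨ (M : ℤ) ≤ k → d k = 0)
    (hcomp : ∀ τ : ℤ, τ ≠ 0 → xcorr c c τ + xcorr d d τ = 0)
    (a b : ℤ → ℂ)
    (ha : ∀ k : ℤ, a k = c k + d (k - (M : ℤ)))
    (hb : ∀ k : ℤ, b k = c k - d (k - (M : ℤ))) :
    ∀ i : ℕ, 1 ≤ i → i ≤ H - 1 →
    ∀ ai bi : ℤ → ℂ,
      (∀ k : ℤ, ai k = if k < (i : ℤ) then 0 else a k) →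
      (∀ k : ℤ, bi k = if k < (i : ℤ) then 0 else b k) →
    ∀ τ : ℤ, (H : ℤ) / 2 ≤ |τ| → |τ| ≤ (H : ℤ) - 1 →
      xcorr a ai τ + xcorr b bi τ = 0 := by
  intro i hi1 hi2 ai bi hai hbi τ hτ1 hτ2
  have hM : (M : ℤ) ≤ |τ| := by
    subst hH; push_cast at hτ1; omega
  have key : ∀ x : ℤ → ℂ, (∀ k : ℤ, k < 0 ∨ (M : ℤ) ≤ k → x k = 0) →
      ∀ p q : ℤ, p - q = τ → x p * conj (x q) = 0 := by
    intro x hx p q hpq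
    by_cases h1 : p < 0 ∨ (M : ℤ) ≤ p
    · rw [hx p h1]; ring
    · by_cases h2 : q < 0 ∨ (M : ℤ) ≤ q
      · rw [hx q h2, map_zero]; ring
      · exfalso
        push_neg at h1 h2
        rcases abs_cases τ with ⟨h, _⟩ | ⟨h, _⟩ <;> omega
  have hpt : ∀ n : ℤ, b n * conj (bi (n - τ)) = -(a n * conj (ai (n - τ))) := by
    intro n
    rw [hai (n - τ), hbi (n - τ)]
    by_cases h : n - τ < (i : ℤ)
    · simp [h]
    · simp only [if_neg h]
      have h1 := key c hc n (n - τ) (by ring)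
      have h2 := key d hd (n - (M : ℤ)) (n - τ - (M : ℤ)) (by ring)
      rw [ha n, ha (n - τ), hb n, hb (n - τ)]
      simp only [map_add, map_sub]
      linear_combination 2 * h1 + 2 * h2
  unfold xcorr
  rw [tsum_congr hpt, tsum_neg]
  ring
end
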